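/- Let E be a real separable Hilbert space, A_Q a nonnegative self-adjoint continuous linear operator on E, Q(V) = ⟨A_Q V, V⟩, and let 𝓐 be a Banach algebra (for instance the algebra of linear endomorphisms of a finite-dimensional Hilbert space with the operator norm). If F, G : E → 𝓐 belong to S(E,Q), then the pointwise product x ↦ F(x)·G(x) belongs to S(E,4Q) (the class associated with the quadratic form 4Q, whose operator is 4A_Q), and ‖F·G‖_{4Q} ≤ ‖F‖_Q·‖G‖_Q. -/

import Mathlib

open scoped InnerProductSpace BigOperators

noncomputable section

/-- `f` belongs to the symbol class `S(E,Q)` (with values in a Banach space `F`)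
with admissible constant `C`. -/
def MemSWith {E F : Type*} [NormedAddCommGroup E] [NormedSpace ℝ E]
    [NormedAddCommGroup F] [NormedSpace ℝ F]
    (Q : E → ℝ) (f : E → F) (C : ℝ) : Prop :=
  ContDiff ℝ (⊤ : ℕ∞) f ∧
    ∀ (m : ℕ) (x : E) (V : Fin m → E),
      ‖iteratedFDeriv ℝ m f x V‖ ≤ C * ∏ i, Real.sqrt (Q (V i))

/-- The norm `‖f‖_Q`: the smallest admissible constant. -/
def normS {E F : Type*} [NormedAddCommGroup E] [NormedSpace ℝ E]
    [NormedAddCommGroup F] [NormedSpace ℝ F]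
    (Q : E → ℝ) (f : E → F) : ℝ :=
  sInf {C : ℝ | 0 ≤ C ∧ MemSWith Q f C}

section Aux

set_option linter.unusedSectionVars false

variable {E : Type*} [NormedAddCommGroup E] [NormedSpace ℝ E]

/-- Cauchy–Schwarz-type subadditivity for the square root of the quadratic form of a
nonnegative self-adjoint operator. -/
lemma sqrtQ_add' {E : Type*} [NormedAddCommGroup E] [InnerProductSpace ℝ E]
    (A : E →L[ℝ] E)
    (hsa : ∀ v w : E, ⟪A v, w⟫_ℝ = ⟪v, A w⟫_ℝ)
    (hnn : ∀ v : E, 0 ≤ ⟪A v, v⟫_ℝ)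
    (v w : E) :
    Real.sqrt ⟪A (v + w), v + w⟫_ℝ ≤ Real.sqrt ⟪A v, v⟫_ℝ + Real.sqrt ⟪A w, w⟫_ℝ := by
  set B : E → E → ℝ := fun v w => ⟪A v, w⟫_ℝ with hB
  have hsymm : ∀ v w, B v w = B w v := by
    intro v w
    rw [hB]; simp only
    rw [hsa, real_inner_comm]
  have hexp : ∀ t : ℝ, B (v + t • w) (v + t • w) = B w w * (t*t) + 2 * B v w * t + B v v := by
    intro t
    simp only [hB, map_add, map_smul, inner_add_left, inner_add_right, inner_smul_left,
      inner_smul_right, ContinuousLinearMap.coe_smul', Pi.smul_apply, smul_eq_mul, conj_trivial]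
    have := hsymm v w
    simp only [hB] at this
    rw [this]; ring
  have hCS : B v w ≤ Real.sqrt (B v v) * Real.sqrt (B w w) := by
    have hdisc := discrim_le_zero (a := B w w) (b := 2 * B v w) (c := B v v)
      (fun t => by rw [← hexp t]; exact hnn _)
    rw [discrim] at hdisc
    have h1 : (B v w)^2 ≤ B v v * B w w := by nlinarith
    calc B v w ≤ |B v w| := le_abs_self _
      _ = Real.sqrt ((B v w)^2) := (Real.sqrt_sq_eq_abs _).symm
      _ ≤ Real.sqrt (B v v * B w w) := Real.sqrt_le_sqrt h1
      _ = Real.sqrt (B v v) * Real.sqrt (B w w) := Real.sqrt_mul (hnn v) _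
  have hexpand : B (v + w) (v + w) = B v v + 2 * B v w + B w w := by
    have := hexp 1
    simpa using this.trans (by ring)
  have : B (v + w) (v + w) ≤ (Real.sqrt (B v v) + Real.sqrt (B w w))^2 := by
    rw [hexpand]
    have h1 := Real.sq_sqrt (hnn v)
    have h2 := Real.sq_sqrt (hnn w)
    nlinarith
  calc Real.sqrt (B (v+w) (v+w)) ≤ Real.sqrt ((Real.sqrt (B v v) + Real.sqrt (B w w))^2) :=
        Real.sqrt_le_sqrt this
    _ = Real.sqrt (B v v) + Real.sqrt (B w w) := Real.sqrt_sq (by positivity)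

/-- `ℝ^m` with the `ℓ¹` norm. -/
abbrev TL1 (m : ℕ) := PiLp 1 (fun _ : Fin m => ℝ)

/-- The continuous linear map `u ↦ ∑ i, u i • V i` on `ℓ¹(Fin m)`. -/
def Lmap {m : ℕ} (V : Fin m → E) : TL1 m →L[ℝ] E :=
  ∑ i, (PiLp.proj 1 (fun _ : Fin m => ℝ) i).smulRight (V i)

lemma Lmap_apply {m : ℕ} (V : Fin m → E) (u : TL1 m) :
    Lmap V u = ∑ i, u i • V i := by
  simp [Lmap, ContinuousLinearMap.sum_apply]

/-- The canonical basis vectors of `ℓ¹(Fin m)`. -/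
def ebasis (m : ℕ) (j : Fin m) : TL1 m := (WithLp.equiv 1 _).symm (Pi.single j 1)

lemma Lmap_ebasis {m : ℕ} (V : Fin m → E) (j : Fin m) : Lmap V (ebasis m j) = V j := by
  rw [Lmap_apply]
  rw [Finset.sum_eq_single j]
  · simp [ebasis]
  · intro i _ hij
    simp [ebasis, Pi.single_apply, hij]
  · simp

lemma norm_ebasis {m : ℕ} (j : Fin m) : ‖ebasis m j‖ = 1 := by
  rw [PiLp.norm_eq_sum (by norm_num)]
  simp [ebasis, Pi.single_apply]
  rw [Finset.sum_eq_single j] <;> simp +contextual [Pi.single_apply]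

lemma pilp_one_norm {m : ℕ} (u : TL1 m) : ‖u‖ = ∑ i, |u i| := by
  rw [PiLp.norm_eq_sum (by norm_num)]
  simp [Real.norm_eq_abs]

/-- Iterated derivative of translated function. -/
lemma itfd_const_add {F : Type*}
    [NormedAddCommGroup F] [NormedSpace ℝ F]
    (f : E → F) (hf : ContDiff ℝ (⊤ : ℕ∞) f) (c : E) (k : ℕ) :
    iteratedFDeriv ℝ k (fun z => f (c + z)) = fun y => iteratedFDeriv ℝ k f (c + y) := by
  induction k with
  | zero => funext y; ext v; simp
  | succ k ih =>
    funext y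
    ext v
    rw [iteratedFDeriv_succ_apply_left, iteratedFDeriv_succ_apply_left, ih]
    have hfd : fderiv ℝ (fun y => iteratedFDeriv ℝ k f (c + y)) y
        = fderiv ℝ (iteratedFDeriv ℝ k f) (c + y) := by
      have hd : DifferentiableAt ℝ (iteratedFDeriv ℝ k f) (c + y) :=
        (hf.differentiable_iteratedFDeriv
          (by exact_mod_cast lt_top_iff_ne_top.2 (by simp))).differentiableAt
      have h2 : HasFDerivAt (fun z : E => c + z) (ContinuousLinearMap.id ℝ E) y := by
        simpa using (hasFDerivAt_id y).const_add c
      have h3 := hd.hasFDerivAt.comp y h2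
      have h4 := h3.fderiv
      simp only [ContinuousLinearMap.comp_id] at h4
      exact h4
    rw [hfd]

/-- Iterated derivative of a function composed with an affine map. -/
lemma itfd_affine {F : Type*} [NormedAddCommGroup F] [NormedSpace ℝ F] {m : ℕ}
    (f : E → F) (hf : ContDiff ℝ (⊤ : ℕ∞) f) (x : E) (V : Fin m → E) (k : ℕ) (t : TL1 m) :
    iteratedFDeriv ℝ k (fun u => f (x + Lmap V u)) t =
      (iteratedFDeriv ℝ k f (x + Lmap V t)).compContinuousLinearMap fun _ => Lmap V := by
  have h1 : (fun u => f (x + Lmap V u)) = (fun z => f (x + z)) ∘ (Lmap V) := rfl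
  have htr : ContDiff ℝ (⊤ : ℕ∞) (fun z => f (x + z)) := hf.comp (contDiff_const.add contDiff_id)
  rw [h1, ContinuousLinearMap.iteratedFDeriv_comp_right (Lmap V) htr t (by exact_mod_cast le_top),
    itfd_const_add f hf x k]

section key
variable {𝓐 : Type*} [NormedRing 𝓐] [NormedAlgebra ℝ 𝓐]
  (Q : E → ℝ) (hQ0 : ∀ v, 0 ≤ Q v)
  (hQsmul : ∀ (c : ℝ) (v : E), Q (c • v) = c ^ 2 * Q v)
  (hQadd : ∀ v w : E, Real.sqrt (Q (v + w)) ≤ Real.sqrt (Q v) + Real.sqrt (Q w))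

include hQ0 hQsmul hQadd

lemma sqrtQ_zero : Real.sqrt (Q 0) = 0 := by
  have : Q (0 : E) = 0 := by simpa using hQsmul 0 0
  simp [this]

lemma sqrtQ_smul (c : ℝ) (v : E) : Real.sqrt (Q (c • v)) = |c| * Real.sqrt (Q v) := by
  rw [hQsmul, Real.sqrt_mul (sq_nonneg c), Real.sqrt_sq_eq_abs]

lemma sqrtQ_L {m : ℕ} (V : Fin m → E) (hV : ∀ i, Q (V i) ≤ 1) (u : TL1 m) :
    Real.sqrt (Q (Lmap V u)) ≤ ‖u‖ := by
  rw [Lmap_apply]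
  calc Real.sqrt (Q (∑ i, u i • V i)) ≤ ∑ i, Real.sqrt (Q (u i • V i)) :=
        Finset.le_sum_of_subadditive (fun v => Real.sqrt (Q v))
          (sqrtQ_zero Q hQ0 hQsmul hQadd).le hQadd Finset.univ (fun i => u i • V i)
    _ = ∑ i, |u i| * Real.sqrt (Q (V i)) := by
        simp_rw [sqrtQ_smul Q hQ0 hQsmul hQadd]
    _ ≤ ∑ i, |u i| * 1 := by
        refine Finset.sum_le_sum fun i _ => ?_
        exact mul_le_mul_of_nonneg_left
          (by simpa using Real.sqrt_le_sqrt (hV i) |>.trans_eq Real.sqrt_one) (abs_nonneg _)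
    _ = ‖u‖ := by rw [pilp_one_norm]; simp

lemma deriv_bound {F : E → 𝓐} {CF : ℝ} (hCF : 0 ≤ CF) (hF : MemSWith Q F CF)
    {m : ℕ} (x : E) (V : Fin m → E) (hV : ∀ i, Q (V i) ≤ 1) (k : ℕ) (t : TL1 m) :
    ‖iteratedFDeriv ℝ k (fun u => F (x + Lmap V u)) t‖ ≤ CF := by
  rw [itfd_affine F hF.1 x V k t]
  refine ContinuousMultilinearMap.opNorm_le_bound hCF fun u => ?_
  simp only [ContinuousMultilinearMap.compContinuousLinearMap_apply]
  calc ‖iteratedFDeriv ℝ k F (x + Lmap V t) (fun j => Lmap V (u j))‖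
      ≤ CF * ∏ j, Real.sqrt (Q (Lmap V (u j))) := hF.2 k _ _
    _ ≤ CF * ∏ j, ‖u j‖ := by
        refine mul_le_mul_of_nonneg_left ?_ hCF
        exact Finset.prod_le_prod (fun j _ => Real.sqrt_nonneg _)
          (fun j _ => sqrtQ_L Q hQ0 hQsmul hQadd V hV (u j))

lemma M1 {F G : E → 𝓐} {CF CG : ℝ} (hCF : 0 ≤ CF) (hCG : 0 ≤ CG)
    (hF : MemSWith Q F CF) (hG : MemSWith Q G CG)
    {m : ℕ} (x : E) (V : Fin m → E) (hV : ∀ i, Q (V i) ≤ 1) :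
    ‖iteratedFDeriv ℝ m (fun y => F y * G y) x V‖ ≤ 2 ^ m * (CF * CG) := by
  have hFG : ContDiff ℝ (⊤ : ℕ∞) (fun y => F y * G y) := hF.1.mul hG.1
  have hFc : ContDiff ℝ (⊤ : ℕ∞) (fun u : TL1 m => F (x + Lmap V u)) :=
    hF.1.comp ((contDiff_const.add contDiff_id).comp (Lmap V).contDiff)
  have hGc : ContDiff ℝ (⊤ : ℕ∞) (fun u : TL1 m => G (x + Lmap V u)) :=
    hG.1.comp ((contDiff_const.add contDiff_id).comp (Lmap V).contDiff)
  have heval : iteratedFDeriv ℝ m (fun y => F y * G y) x V =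
      iteratedFDeriv ℝ m (fun u : TL1 m => F (x + Lmap V u) * G (x + Lmap V u)) 0
        (fun j => ebasis m j) := by
    rw [itfd_affine (fun y => F y * G y) hFG x V m 0]
    simp [Lmap_ebasis]
  rw [heval]
  calc ‖iteratedFDeriv ℝ m (fun u : TL1 m => F (x + Lmap V u) * G (x + Lmap V u)) 0
        (fun j => ebasis m j)‖
      ≤ ‖iteratedFDeriv ℝ m (fun u : TL1 m => F (x + Lmap V u) * G (x + Lmap V u)) 0‖ *
          ∏ j, ‖ebasis m j‖ := ContinuousMultilinearMap.le_opNorm _ _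
    _ = ‖iteratedFDeriv ℝ m (fun u : TL1 m => F (x + Lmap V u) * G (x + Lmap V u)) 0‖ := by
        simp [norm_ebasis]
    _ ≤ ∑ i ∈ Finset.range (m + 1), (m.choose i : ℝ) *
          ‖iteratedFDeriv ℝ i (fun u : TL1 m => F (x + Lmap V u)) 0‖ *
          ‖iteratedFDeriv ℝ (m - i) (fun u : TL1 m => G (x + Lmap V u)) 0‖ :=
        norm_iteratedFDeriv_mul_le hFc hGc 0 (by exact_mod_cast le_top)
    _ ≤ ∑ i ∈ Finset.range (m + 1), (m.choose i : ℝ) * CF * CG := by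
        refine Finset.sum_le_sum fun i _ => ?_
        have h1 := deriv_bound Q hQ0 hQsmul hQadd hCF hF x V hV i 0
        have h2 := deriv_bound Q hQ0 hQsmul hQadd hCG hG x V hV (m - i) 0
        have := mul_le_mul h1 h2 (norm_nonneg _) hCF
        calc (m.choose i : ℝ) * ‖iteratedFDeriv ℝ i (fun u : TL1 m => F (x + Lmap V u)) 0‖ *
              ‖iteratedFDeriv ℝ (m - i) (fun u : TL1 m => G (x + Lmap V u)) 0‖
            = (m.choose i : ℝ) * (‖iteratedFDeriv ℝ i (fun u : TL1 m => F (x + Lmap V u)) 0‖ *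
              ‖iteratedFDeriv ℝ (m - i) (fun u : TL1 m => G (x + Lmap V u)) 0‖) := by ring
          _ ≤ (m.choose i : ℝ) * (CF * CG) := by
              exact mul_le_mul_of_nonneg_left this (by positivity)
          _ = (m.choose i : ℝ) * CF * CG := by ring
    _ = 2 ^ m * (CF * CG) := by
        rw [← Finset.sum_mul, ← Finset.sum_mul, mul_assoc]
        congr 1
        rw [← Nat.cast_sum]
        rw [Nat.sum_range_choose]
        push_cast; ring
end key

lemma key {𝓐 : Type*} [NormedRing 𝓐] [NormedAlgebra ℝ 𝓐]
    (Q : E → ℝ) (hQ0 : ∀ v, 0 ≤ Q v)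
    (hQsmul : ∀ (c : ℝ) (v : E), Q (c • v) = c ^ 2 * Q v)
    (hQadd : ∀ v w : E, Real.sqrt (Q (v + w)) ≤ Real.sqrt (Q v) + Real.sqrt (Q w))
    {F G : E → 𝓐} {CF CG : ℝ} (hCF : 0 ≤ CF) (hCG : 0 ≤ CG)
    (hF : MemSWith Q F CF) (hG : MemSWith Q G CG) :
    MemSWith (fun v => 4 * Q v) (fun x => F x * G x) (CF * CG) := by
  refine ⟨hF.1.mul hG.1, fun m x V => ?_⟩
  have hsqrt4 : Real.sqrt 4 = 2 := by
    rw [show (4 : ℝ) = 2 ^ 2 by norm_num, Real.sqrt_sq two_pos.le]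
  have hε : ∀ ε > (0 : ℝ), ‖iteratedFDeriv ℝ m (fun y => F y * G y) x V‖ ≤
      CF * CG * ∏ i, Real.sqrt (4 * (Q (V i) + ε)) := by
    intro ε hεpos
    set c : Fin m → ℝ := fun i => Real.sqrt (Q (V i) + ε) with hc
    have hcpos : ∀ i, 0 < c i := fun i => Real.sqrt_pos.2 (by linarith [hQ0 (V i)])
    set V' : Fin m → E := fun i => (c i)⁻¹ • V i with hV'
    have hVeq : ∀ i, c i • V' i = V i := fun i => smul_inv_smul₀ (hcpos i).ne' _
    have hQV' : ∀ i, Q (V' i) ≤ 1 := by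
      intro i
      rw [hV']
      simp only
      rw [hQsmul]
      have hc2 : c i ^ 2 = Q (V i) + ε := Real.sq_sqrt (by linarith [hQ0 (V i)])
      rw [inv_pow, hc2, inv_mul_le_one₀ (by linarith [hQ0 (V i)])]
      linarith
    have hmap : (iteratedFDeriv ℝ m (fun y => F y * G y) x) V =
        (∏ i, c i) • (iteratedFDeriv ℝ m (fun y => F y * G y) x) V' := by
      conv_lhs => rw [show V = fun i => c i • V' i from funext fun i => (hVeq i).symm]
      exact (iteratedFDeriv ℝ m (fun y => F y * G y) x).map_smul_univ c V'
    rw [hmap, norm_smul]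
    have hprodpos : 0 ≤ ∏ i, c i := Finset.prod_nonneg fun i _ => (hcpos i).le
    rw [Real.norm_eq_abs, abs_of_nonneg hprodpos]
    calc (∏ i, c i) * ‖iteratedFDeriv ℝ m (fun y => F y * G y) x V'‖
        ≤ (∏ i, c i) * (2 ^ m * (CF * CG)) :=
          mul_le_mul_of_nonneg_left (M1 Q hQ0 hQsmul hQadd hCF hCG hF hG x V' hQV') hprodpos
      _ = CF * CG * ∏ i, (2 * c i) := by
          rw [Finset.prod_mul_distrib, Finset.prod_const]
          simp [Finset.card_univ]
          ring
      _ = CF * CG * ∏ i, Real.sqrt (4 * (Q (V i) + ε)) := by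
          congr 1
          refine Finset.prod_congr rfl fun i _ => ?_
          rw [Real.sqrt_mul (by norm_num), hsqrt4]
  have hlim : Filter.Tendsto (fun ε : ℝ => CF * CG * ∏ i, Real.sqrt (4 * (Q (V i) + ε)))
      (nhdsWithin 0 (Set.Ioi 0))
      (nhds (CF * CG * ∏ i, Real.sqrt (4 * Q (V i)))) := by
    have hcont : Continuous (fun ε : ℝ => CF * CG * ∏ i, Real.sqrt (4 * (Q (V i) + ε))) := by
      refine continuous_const.mul (continuous_finset_prod _ fun i _ => ?_)
      exact Real.continuous_sqrt.comp (by continuity)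
    have := hcont.tendsto 0
    simp only [add_zero] at this
    exact this.mono_left nhdsWithin_le_nhds
  have := ge_of_tendsto hlim (Filter.eventually_iff_exists_mem.2
    ⟨Set.Ioi 0, self_mem_nhdsWithin, fun ε hε' => hε ε hε'⟩)
  simpa using this

lemma normS_spec {F : Type*} [NormedAddCommGroup F] [NormedSpace ℝ F]
    (Q : E → ℝ) (f : E → F) (h : ∃ C, 0 ≤ C ∧ MemSWith Q f C) :
    0 ≤ sInf {C : ℝ | 0 ≤ C ∧ MemSWith Q f C} ∧
      MemSWith Q f (sInf {C : ℝ | 0 ≤ C ∧ MemSWith Q f C}) := by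
  obtain ⟨C0, hC0, hmem⟩ := h
  set S : Set ℝ := {C : ℝ | 0 ≤ C ∧ MemSWith Q f C} with hS
  have hne : S.Nonempty := ⟨C0, hC0, hmem⟩
  have h0 : 0 ≤ sInf S := le_csInf hne fun C hC => hC.1
  refine ⟨h0, hmem.1, fun m x V => ?_⟩
  have hP : 0 ≤ ∏ i, Real.sqrt (Q (V i)) :=
    Finset.prod_nonneg fun i _ => Real.sqrt_nonneg _
  rcases hP.eq_or_lt with hP0 | hPpos
  · have := hmem.2 m x V
    rw [← hP0] at this ⊢
    simpa using this
  · rw [← div_le_iff₀ hPpos]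
    refine le_csInf hne fun C hC => ?_
    rw [div_le_iff₀ hPpos]
    exact hC.2.2 m x V

end Aux

theorem product_of_symbols
    {E : Type*} [NormedAddCommGroup E] [InnerProductSpace ℝ E]
    [TopologicalSpace.SeparableSpace E] [CompleteSpace E]
    {𝓐 : Type*} [NormedRing 𝓐] [NormedAlgebra ℝ 𝓐] [CompleteSpace 𝓐]
    (A : E →L[ℝ] E)
    (hsa : ∀ v w : E, ⟪A v, w⟫_ℝ = ⟪v, A w⟫_ℝ)
    (hnn : ∀ v : E, 0 ≤ ⟪A v, v⟫_ℝ)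
    (Q : E → ℝ) (hQ : ∀ v, Q v = ⟪A v, v⟫_ℝ)
    (F G : E → 𝓐)
    (hF : ∃ C, 0 ≤ C ∧ MemSWith Q F C)
    (hG : ∃ C, 0 ≤ C ∧ MemSWith Q G C) :
    (∃ C, 0 ≤ C ∧ MemSWith (fun v => 4 * Q v) (fun x => F x * G x) C) ∧
    normS (fun v => 4 * Q v) (fun x => F x * G x) ≤ normS Q F * normS Q G := by
  have hQ0 : ∀ v, 0 ≤ Q v := fun v => (hQ v) ▸ hnn v
  have hQsmul : ∀ (c : ℝ) (v : E), Q (c • v) = c ^ 2 * Q v := by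
    intro c v
    rw [hQ, hQ, map_smul, inner_smul_left, inner_smul_right]
    simp only [conj_trivial]
    ring
  have hQadd : ∀ v w : E, Real.sqrt (Q (v + w)) ≤ Real.sqrt (Q v) + Real.sqrt (Q w) := by
    intro v w
    simpa only [← hQ] using sqrtQ_add' A hsa hnn v w
  obtain ⟨CF, hCF0, hFm⟩ := hF
  obtain ⟨CG, hCG0, hGm⟩ := hG
  constructor
  · exact ⟨CF * CG, mul_nonneg hCF0 hCG0, key Q hQ0 hQsmul hQadd hCF0 hCG0 hFm hGm⟩
  · have hFs := normS_spec Q F ⟨CF, hCF0, hFm⟩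
    have hGs := normS_spec Q G ⟨CG, hCG0, hGm⟩
    have hmem := key Q hQ0 hQsmul hQadd hFs.1 hGs.1 hFs.2 hGs.2
    have hbdd : BddBelow {C : ℝ | 0 ≤ C ∧ MemSWith (fun v => 4 * Q v) (fun x => F x * G x) C} :=
      ⟨0, fun C hC => hC.1⟩
    exact csInf_le hbdd ⟨mul_nonneg hFs.1 hGs.1, hmem⟩

end
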